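/- Let F be a nonconstant polynomial in K[x_1,…,x_n] and u = (u_1,…,u_n) ∈ (O_S^*)^n. Then h̃(D_u(F)) ≤ (2|I_F| + 1)·h̃(F) + |S| + 3𝔤; in particular, since |I_F| ≤ binom(n + deg F, n) and |S| + 3𝔤 ≤ 3·max{1, 2𝔤−2+|S|}, there exist constants c_1, c_2 depending only on n and deg F (one may take c_1 = 2·binom(n+deg F, n) + 1 and c_2 = 3) such that h̃(D_u(F)) ≤ c_1·h̃(F) + c_2·max{1, 2𝔤−2+|S|}. -/

import Mathlib

open scoped BigOperators Classical

namespace FunctionFieldGCD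

variable {K : Type*} [Field K] {Point : Type*}

/-- Truncated order of vanishing `v_𝔭^0(f) = max {0, v_𝔭(f)}`. -/
noncomputable def v0 (v : Point → K → ℤ) (p : Point) (f : K) : ℤ := max 0 (v p f)

/-- The height `h(f) = Σ_𝔭 −min{0, v_𝔭(f)}` of `f`, counting poles with multiplicity. -/
noncomputable def height (v : Point → K → ℤ) (f : K) : ℤ := ∑ᶠ p : Point, max 0 (-(v p f))

/-- `min {v_𝔭^0(f), v_𝔭^0(g)}` with the convention `v_𝔭^0(0) = +∞`. -/
noncomputable def minv0 (v : Point → K → ℤ) (p : Point) (f g : K) : ℤ :=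
  if f = 0 then v0 v p g else if g = 0 then v0 v p f else min (v0 v p f) (v0 v p g)

/-- `N_{S,gcd}(f,g) = Σ_{𝔭∉S} min{v_𝔭^0(f), v_𝔭^0(g)}`. -/
noncomputable def NSgcd (v : Point → K → ℤ) (S : Set Point) (f g : K) : ℤ :=
  ∑ᶠ p ∈ Sᶜ, minv0 v p f g

/-- `h_gcd(f,g) = Σ_{𝔭} min{v_𝔭^0(f), v_𝔭^0(g)}`. -/
noncomputable def hgcd (v : Point → K → ℤ) (f g : K) : ℤ :=
  ∑ᶠ p : Point, minv0 v p f g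

/-- `N_S(f)`: number of zeros of `f` outside `S`, with multiplicity. -/
noncomputable def NS (v : Point → K → ℤ) (S : Set Point) (f : K) : ℤ :=
  ∑ᶠ p ∈ Sᶜ, v0 v p f

/-- `N̄_S(f)`: number of zeros of `f` outside `S`, without multiplicity. -/
noncomputable def NSbar (v : Point → K → ℤ) (S : Set Point) (f : K) : ℤ :=
  ∑ᶠ p ∈ Sᶜ, min 1 (v0 v p f)

/-- membership in the group `O_S^*` of `S`-units. -/
def IsSUnit (v : Point → K → ℤ) (S : Set Point) (f : K) : Prop :=
  f ≠ 0 ∧ ∀ p ∉ S, v p f = 0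

/-- `f` is a constant, i.e. belongs to (the image of) `k`. -/
def IsConst (k : Type*) [Field k] [Algebra k K] (f : K) : Prop :=
  ∃ c : k, algebraMap k K c = f

/-- Projective height of a finite tuple: `h(f_0,…,f_m) = Σ_𝔭 −min_j v_𝔭(f_j)`. -/
noncomputable def heightProj {ι : Type*} [Fintype ι] (v : Point → K → ℤ) (f : ι → K) : ℤ :=
  ∑ᶠ p : Point,
    -(if h : (Finset.univ : Finset ι).Nonempty then Finset.univ.inf' h fun j => v p (f j) else 0)

/-- `v_𝔭(F) = min_{i ∈ I_F} v_𝔭(a_i)` for a multivariable polynomial `F = Σ a_i x^i`. -/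
noncomputable def vPoly {n : ℕ} (v : Point → K → ℤ) (p : Point) (F : MvPolynomial (Fin n) K) :
    ℤ :=
  if h : F.support.Nonempty then F.support.inf' h fun mm => v p (MvPolynomial.coeff mm F) else 0

/-- The height `h(F) = Σ_𝔭 −v_𝔭(F)` of a multivariable polynomial. -/
noncomputable def hPoly {n : ℕ} (v : Point → K → ℤ) (F : MvPolynomial (Fin n) K) : ℤ :=
  ∑ᶠ p : Point, -(vPoly v p F)

/-- The relevant height `h̃(F) = Σ_𝔭 −min{0, v_𝔭(F)}` of a multivariable polynomial. -/
noncomputable def htilde {n : ℕ} (v : Point → K → ℤ) (F : MvPolynomial (Fin n) K) : ℤ :=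
  ∑ᶠ p : Point, max 0 (-(vPoly v p F))

/-- `max_{1≤i≤n} h(g_i)` (heights are nonnegative, so the `toNat` is harmless). -/
noncomputable def maxHeight {n : ℕ} (v : Point → K → ℤ) (g : Fin n → K) : ℤ :=
  ((Finset.univ.sup fun i => (height v (g i)).toNat : ℕ) : ℤ)

/-- `u^m = u_1^{m_1} ⋯ u_n^{m_n}` for an integer exponent vector `m`. -/
noncomputable def prodZPow {n : ℕ} (u : Fin n → K) (mm : Fin n → ℤ) : K :=
  ∏ j, u j ^ mm j

/-- Coprimality of multivariable polynomials: no common non-unit factor. -/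
def CoprimePoly {n : ℕ} (F G : MvPolynomial (Fin n) K) : Prop :=
  ∀ P : MvPolynomial (Fin n) K, P ∣ F → P ∣ G → IsUnit P

/-- `P` is a monomial `a·x^i`. -/
def IsMonomialPoly {n : ℕ} (P : MvPolynomial (Fin n) K) : Prop :=
  ∃ (mm : Fin n →₀ ℕ) (a : K), P = MvPolynomial.monomial mm a

/-- Axioms expressing that `K`, equipped with the family of normalized order functions
`v_𝔭` indexed by the points `𝔭 ∈ C(k)` of a smooth projective curve `C` of genus `genus`
over the algebraically closed field `k`, is the function field `k(C)`. -/
structure IsFunctionField (k : Type*) [Field k] [Algebra k K]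
    (v : Point → K → ℤ) (genus : ℕ) : Prop where
  v_mul : ∀ (p : Point) (f g : K), f ≠ 0 → g ≠ 0 → v p (f * g) = v p f + v p g
  v_add : ∀ (p : Point) (f g : K), f ≠ 0 → g ≠ 0 → f + g ≠ 0 → min (v p f) (v p g) ≤ v p (f + g)
  v_one : ∀ p : Point, v p (1 : K) = 0
  v_algebraMap : ∀ (p : Point) (c : k), c ≠ 0 → v p (algebraMap k K c) = 0
  exists_uniformizer : ∀ p : Point, ∃ f : K, f ≠ 0 ∧ v p f = 1
  finite_support : ∀ f : K, f ≠ 0 → {p : Point | v p f ≠ 0}.Finite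
  sum_v : ∀ f : K, f ≠ 0 → ∑ᶠ p : Point, v p f = 0
  const_of_nonneg : ∀ f : K, f ≠ 0 → (∀ p : Point, 0 ≤ v p f) → ∃ c : k, algebraMap k K c = f
  riemann_roch : ∀ D : Point →₀ ℤ, 2 * (genus : ℤ) - 2 < D.sum (fun _ d => d) →
    (Module.finrank k
        (Submodule.span k {f : K | f = 0 ∨ ∀ p : Point, -(D p) ≤ v p f}) : ℤ)
      = D.sum (fun _ d => d) + 1 - genus

/-- Axioms for the global derivation `η ↦ η' = dη/dt` on `K` determined by an element
`t` as in Proposition 12 (`dt p` plays the role of `v_𝔭(d_𝔭 t)`). -/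
structure IsGoodDerivation (k : Type*) [Field k] [Algebra k K]
    (v : Point → K → ℤ) (genus : ℕ) (D : K → K) (dt : Point → ℤ) : Prop where
  map_add : ∀ f g : K, D (f + g) = D f + D g
  leibniz : ∀ f g : K, D (f * g) = f * D g + g * D f
  map_const : ∀ c : k, D (algebraMap k K c) = 0
  ker_const : ∀ f : K, D f = 0 → ∃ c : k, algebraMap k K c = f
  v_D_of_vne : ∀ f : K, f ≠ 0 → ∀ p : Point, v p f ≠ 0 →
    D f ≠ 0 ∧ v p (D f) = v p f - 1 - dt p
  v_D_of_veq : ∀ f : K, f ≠ 0 → ∀ p : Point, v p f = 0 → D f ≠ 0 → -(dt p) ≤ v p (D f)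
  sum_dt : ∑ᶠ p : Point, max 0 (dt p) ≤ 3 * (genus : ℤ)

/-- `D_u(F) = Σ_{i∈I_F} ((a_i u^i)' / u^i)·x^i`. -/
noncomputable def Du {n : ℕ} (D : K → K) (u : Fin n → K) (F : MvPolynomial (Fin n) K) :
    MvPolynomial (Fin n) K :=
  ∑ mm ∈ F.support,
    MvPolynomial.monomial mm
      ((D (MvPolynomial.coeff mm F * ∏ j, u j ^ mm j)) / ∏ j, u j ^ mm j)

/-!
At a point `𝔭`, the coefficient `(a_i u^i)' / u^i` of `D_u(F)` has order at least
`v_𝔭(a_i) - v_𝔭(d_𝔭 t) - ε`, where `ε = 1` if `a_i u^i` has a zero or a pole at `𝔭` and `ε = 0`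
otherwise; and `ε ≤ [𝔭 is a zero or pole of some a_i] + [𝔭 is a zero or pole of some u_j]`.
Summing over `𝔭`, the first term gives `h̃(F)`, the second at most `3𝔤`, the third at most
`Σ_i 2 h(a_i) ≤ 2 |I_F| h̃(F)` (a function has as many zeros as poles), and the last the number
`z` of points where some `u_j` has a zero or a pole, all of which lie in `S`. For the second
bound, `z ≠ 1` since again an `S`-unit has as many zeros as poles, which gives
`z + 3𝔤 ≤ 3 max {1, 2𝔤 - 2 + |S|}`.
-/

open Finset Function

section

variable {k : Type*} [Field k] [Algebra k K] {v : Point → K → ℤ} {genus : ℕ} {D : K → K}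
  {dt : Point → ℤ} {n : ℕ} {u : Fin n → K}

theorem IsFunctionField.v_div (hK : IsFunctionField k v genus) (p : Point) {x y : K}
    (hx : x ≠ 0) (hy : y ≠ 0) : v p (x / y) = v p x - v p y := by
  have := hK.v_mul p (x / y) y (div_ne_zero hx hy) hy
  rw [div_mul_cancel₀ _ hy] at this
  omega

theorem IsFunctionField.v_prod (hK : IsFunctionField k v genus) (p : Point) {ι : Type*}
    (s : Finset ι) {f : ι → K} (hf : ∀ i ∈ s, f i ≠ 0) :
    v p (∏ i ∈ s, f i) = ∑ i ∈ s, v p (f i) := by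
  induction s using Finset.cons_induction with
  | empty => simpa using hK.v_one p
  | cons a s ha ih =>
    rw [prod_cons, sum_cons, hK.v_mul p _ _ (hf a (mem_cons_self a s))
      (prod_ne_zero_iff.2 fun i hi => hf i (mem_cons_of_mem hi)),
      ih fun i hi => hf i (mem_cons_of_mem hi)]

theorem IsFunctionField.v_pow (hK : IsFunctionField k v genus) (p : Point) {x : K}
    (hx : x ≠ 0) (m : ℕ) : v p (x ^ m) = m * v p x := by
  simpa using hK.v_prod p (range m) (f := fun _ => x) (by simp [hx])

theorem IsFunctionField.v_prod_pow_eq_zero (hK : IsFunctionField k v genus) (p : Point)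
    (hu : ∀ j, u j ≠ 0) (h : ∀ j, v p (u j) = 0) (m : Fin n →₀ ℕ) :
    v p (∏ j, u j ^ m j) = 0 := by
  rw [hK.v_prod p _ fun j _ => pow_ne_zero _ (hu j)]
  exact sum_eq_zero fun j _ => by rw [hK.v_pow p (hu j), h j, mul_zero]

theorem IsFunctionField.exists_ne_v_ne_zero (hK : IsFunctionField k v genus) {f : K}
    (hf : f ≠ 0) {p : Point} (hp : v p f ≠ 0) : ∃ q ≠ p, v q f ≠ 0 := by
  by_contra! h
  have := finsum_eq_single (fun q => v q f) p h
  rw [hK.sum_v f hf] at this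
  exact hp this.symm

theorem IsFunctionField.ncard_setOf_exists_v_ne_zero_ne_one (hK : IsFunctionField k v genus)
    {ι : Type*} {f : ι → K} (hf : ∀ j, f j ≠ 0) : {p | ∃ j, v p (f j) ≠ 0}.ncard ≠ 1 := by
  intro h
  obtain ⟨p, hp⟩ := Set.ncard_eq_one.1 h
  obtain ⟨j, hj⟩ : p ∈ {p | ∃ j, v p (f j) ≠ 0} := hp ▸ Set.mem_singleton p
  obtain ⟨q, hqp, hq⟩ := hK.exists_ne_v_ne_zero (hf j) hj
  exact hqp (Set.eq_of_mem_singleton (hp ▸ ⟨j, hq⟩ : q ∈ ({p} : Set Point)))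

theorem IsFunctionField.ncard_setOf_v_ne_zero_le (hK : IsFunctionField k v genus) {f : K}
    (hf : f ≠ 0) : ({p | v p f ≠ 0}.ncard : ℤ) ≤ 2 * height v f := by
  have hfin := hK.finite_support f hf
  set T := hfin.toFinset
  have hsub {g : ℤ → ℤ} (hg : g 0 = 0) : (support fun p => g (v p f)) ⊆ T := by
    simpa [T] using support_comp_subset hg (fun p => v p f)
  have hsum : ∑ p ∈ T, v p f = 0 := by
    rw [← finsum_eq_sum_of_support_subset (fun p => v p f) (hsub (g := id) rfl)]
    exact hK.sum_v f hf
  have hle : ∑ p ∈ T, (1 : ℤ) ≤ ∑ p ∈ T, (v p f + 2 * max 0 (-(v p f))) :=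
    sum_le_sum fun p hp => by
      have : v p f ≠ 0 := by simpa [T] using hp
      omega
  rw [sum_add_distrib, hsum, ← mul_sum] at hle
  rw [Set.ncard_eq_toFinset_card _ hfin, height,
    finsum_eq_sum_of_support_subset _ (hsub (g := fun x => max 0 (-x)) (by simp))]
  simpa using hle

def IsFunctionField.valuationGe (hK : IsFunctionField k v genus) (p : Point) (m : ℤ) :
    Submodule k K where
  carrier := {f | f = 0 ∨ m ≤ v p f}
  zero_mem' := Or.inl rfl
  add_mem' := by
    rintro f g (rfl | hf) (rfl | hg)
    · simp
    · simp [hg]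
    · simp [hf]
    by_cases hf0 : f = 0
    · simp [hf0, hg]
    by_cases hg0 : g = 0
    · simp [hg0, hf]
    by_cases hfg : f + g = 0
    · exact Or.inl hfg
    exact Or.inr ((le_min hf hg).trans (hK.v_add p f g hf0 hg0 hfg))
  smul_mem' := by
    rintro c f (rfl | hf)
    · simp
    by_cases hc : c = 0
    · simp [hc]
    by_cases hf0 : f = 0
    · simp [hf0]
    right
    rw [Algebra.smul_def, hK.v_mul p _ _ (by simpa using hc) hf0, hK.v_algebraMap p c hc,
      zero_add]
    exact hf

theorem IsFunctionField.mem_valuationGe (hK : IsFunctionField k v genus) {p : Point} {m : ℤ}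
    {f : K} : f ∈ hK.valuationGe p m ↔ f = 0 ∨ m ≤ v p f :=
  Iff.rfl

theorem IsFunctionField.valuationGe_antitone (hK : IsFunctionField k v genus) (p : Point) :
    Antitone (hK.valuationGe p) := fun _ _ hmn _ hf =>
  hf.imp_right hmn.trans

theorem IsFunctionField.finite_setOf_notMem_valuationGe_zero
    (hK : IsFunctionField k v genus) (g : K) : {p | g ∉ hK.valuationGe p 0}.Finite := by
  by_cases hg : g = 0
  · simp [hg]
  refine (hK.finite_support g hg).subset fun p hp => ?_
  simp only [Set.mem_ofPred_eq, hK.mem_valuationGe, hg, false_or, not_le] at hp ⊢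
  exact hp.ne

def IsFunctionField.riemannRochSpace (hK : IsFunctionField k v genus) (E : Point →₀ ℤ) :
    Submodule k K :=
  ⨅ p, hK.valuationGe p (-(E p))

theorem IsFunctionField.mem_riemannRochSpace (hK : IsFunctionField k v genus)
    {E : Point →₀ ℤ} {f : K} : f ∈ hK.riemannRochSpace E ↔ f = 0 ∨ ∀ p, -(E p) ≤ v p f := by
  simp only [IsFunctionField.riemannRochSpace, Submodule.mem_iInf, hK.mem_valuationGe,
    forall_or_left]

theorem IsFunctionField.riemannRochSpace_mono (hK : IsFunctionField k v genus)
    {E E' : Point →₀ ℤ} (h : E ≤ E') : hK.riemannRochSpace E ≤ hK.riemannRochSpace E' :=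
  iInf_mono fun p => hK.valuationGe_antitone p (neg_le_neg (h p))

theorem IsFunctionField.finrank_riemannRochSpace (hK : IsFunctionField k v genus)
    {E : Point →₀ ℤ} (h : 2 * (genus : ℤ) - 2 < E.sum fun _ d => d) :
    (Module.finrank k (hK.riemannRochSpace E) : ℤ) = (E.sum fun _ d => d) + 1 - genus := by
  have hspan : Submodule.span k {f : K | f = 0 ∨ ∀ p, -(E p) ≤ v p f} =
      hK.riemannRochSpace E := by
    conv_rhs => rw [← Submodule.span_eq (hK.riemannRochSpace E)]
    congr 1
    ext f
    exact hK.mem_riemannRochSpace.symm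
  rw [← hspan]
  exact hK.riemann_roch E h

theorem IsFunctionField.riemannRochSpace_lt (hK : IsFunctionField k v genus)
    {E E' : Point →₀ ℤ} (h : E ≤ E') (hdeg : (E.sum fun _ d => d) < E'.sum fun _ d => d)
    (hE : 2 * (genus : ℤ) - 2 < E.sum fun _ d => d) :
    hK.riemannRochSpace E < hK.riemannRochSpace E' := by
  refine lt_of_le_of_ne (hK.riemannRochSpace_mono h) fun heq => ?_
  have h1 := hK.finrank_riemannRochSpace hE
  have h2 := hK.finrank_riemannRochSpace (hE.trans hdeg)
  rw [heq] at h1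
  omega

theorem Finsupp.sum_id_single_sub_single {α : Type*} (a b : α) (m n : ℤ) :
    ((Finsupp.single a m - Finsupp.single b n).sum fun _ d => d) = m - n := by
  rw [Finsupp.sum_sub_index fun _ _ _ => rfl, Finsupp.sum_single_index rfl,
    Finsupp.sum_single_index rfl]

/-- Riemann–Roch gives `L(m q - 2 p) ⊊ L(m q - p)`; any element of the difference
has a simple zero at `p`. -/
theorem IsFunctionField.exists_mem_riemannRochSpace_v_eq_one (hK : IsFunctionField k v genus)
    {p q : Point} (hpq : p ≠ q) {m : ℤ} (hm : 2 * (genus : ℤ) < m) :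
    ∃ f ∈ hK.riemannRochSpace (Finsupp.single q m), f ≠ 0 ∧ v p f = 1 := by
  set E₁ := Finsupp.single q m - Finsupp.single p 1
  set E₂ := Finsupp.single q m - Finsupp.single p 2
  have hE : ∀ x ≠ p, E₂ x = E₁ x := fun x hx => by
    simp [E₁, E₂, Finsupp.single_apply, hx.symm]
  have hlt : hK.riemannRochSpace E₂ < hK.riemannRochSpace E₁ := by
    refine hK.riemannRochSpace_lt (fun x => ?_) ?_ ?_ <;>
      simp only [E₁, E₂, Finsupp.coe_sub, Pi.sub_apply, Finsupp.single_apply,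
        Finsupp.sum_id_single_sub_single] <;>
      (try split_ifs) <;> omega
  obtain ⟨f, hf₁, hf₂⟩ := SetLike.exists_of_lt hlt
  rw [hK.mem_riemannRochSpace] at hf₁ hf₂
  simp only [not_or, not_forall, not_le] at hf₂
  obtain ⟨hf0, x, hx⟩ := hf₂
  have hf₁ := hf₁.resolve_left hf0
  obtain rfl : x = p := by
    by_contra hxp
    have := hf₁ x
    rw [← hE x hxp] at this
    omega
  refine ⟨f, hK.riemannRochSpace_mono (fun y => ?_) (hK.mem_riemannRochSpace.2 (Or.inr hf₁)),
    hf0, ?_⟩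
  · simp only [E₁, Finsupp.coe_sub, Pi.sub_apply, Finsupp.single_apply]
    split_ifs <;> omega
  · have := hf₁ x
    simp only [E₁, E₂, Finsupp.coe_sub, Pi.sub_apply, Finsupp.single_apply, hpq.symm,
      if_false, if_true] at this hx
    omega

def IsGoodDerivation.toLinearMap (hD : IsGoodDerivation k v genus D dt) : K →ₗ[k] K where
  toFun := D
  map_add' := hD.map_add
  map_smul' c x := by simp [Algebra.smul_def, hD.leibniz, hD.map_const]

theorem IsGoodDerivation.v_D_ge (hD : IsGoodDerivation k v genus D dt) {c : K} (hc : c ≠ 0)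
    (hDc : D c ≠ 0) (p : Point) :
    v p c - dt p - (if v p c = 0 then 0 else 1) ≤ v p (D c) := by
  split_ifs with h
  · simpa [h] using hD.v_D_of_veq c hc p h hDc
  · rw [(hD.v_D_of_vne c hc p h).2]
    omega

/-- `hD.sum_dt` is a `finsum`, hence says nothing unless this set is finite.
If `dt p > 0`, the derivative of a local parameter at `p` has a pole at `p`. Taking these
parameters inside one finite-dimensional Riemann–Roch space `L`, whose image under `D` has only
finitely many poles, leaves only finitely many such `p`. -/
theorem IsGoodDerivation.finite_setOf_dt_pos (hD : IsGoodDerivation k v genus D dt)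
    (hK : IsFunctionField k v genus) : {p | 0 < dt p}.Finite := by
  rcases isEmpty_or_nonempty Point with hP | ⟨⟨q⟩⟩
  · exact Set.toFinite _
  set L := hK.riemannRochSpace (Finsupp.single q (2 * genus + 1))
  have hL : (Module.finrank k L : ℤ) = genus + 2 := by
    rw [hK.finrank_riemannRochSpace] <;> rw [Finsupp.sum_single_index rfl] <;> omega
  have : FiniteDimensional k L := Module.finite_of_finrank_pos (by omega)
  obtain ⟨s, hs⟩ := (Submodule.fg_iff_finiteDimensional (L.map hD.toLinearMap)).2 inferInstance
  refine ((Set.finite_singleton q).union (s.finite_toSet.biUnion fun g _ =>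
    hK.finite_setOf_notMem_valuationGe_zero g)).subset fun p hp => ?_
  by_contra! hbad
  simp only [Set.mem_union, Set.mem_singleton_iff, Set.mem_iUnion, Set.mem_ofPred_eq,
    exists_prop, not_or, not_exists, not_and, not_not, SetLike.mem_coe] at hbad hp
  obtain ⟨f, hfL, hf0, hvf⟩ := hK.exists_mem_riemannRochSpace_v_eq_one hbad.1
    (m := 2 * genus + 1) (by omega)
  have hDf : D f ∈ hK.valuationGe p 0 := by
    have hW : L.map hD.toLinearMap ≤ hK.valuationGe p 0 :=
      hs ▸ Submodule.span_le.2 hbad.2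
    exact hW (Submodule.mem_map_of_mem hfL)
  obtain ⟨hDf0, hvDf⟩ := hD.v_D_of_vne f hf0 p (by omega)
  have := hDf.resolve_left hDf0
  omega

theorem coeff_Du (F : MvPolynomial (Fin n) K) (m : Fin n →₀ ℕ) :
    (Du D u F).coeff m =
      if m ∈ F.support then D (F.coeff m * ∏ j, u j ^ m j) / ∏ j, u j ^ m j else 0 := by
  rw [Du, MvPolynomial.coeff_sum]
  simp_rw [MvPolynomial.coeff_monomial]
  exact sum_ite_eq' F.support m _

theorem support_Du_subset (F : MvPolynomial (Fin n) K) :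
    (Du D u F).support ⊆ F.support := fun m hm => by
  by_contra h
  simp [MvPolynomial.mem_support_iff, coeff_Du, h] at hm

theorem card_support_le_choose {R : Type*} [CommSemiring R] (F : MvPolynomial (Fin n) R) :
    #F.support ≤ (n + F.totalDegree).choose n := by
  set d := F.totalDegree
  have hcons : Set.InjOn (fun m : Fin n →₀ ℕ => Finsupp.cons (d - m.sum fun _ e => e) m)
      F.support := fun m _ m' _ h => by
    have := congrArg Finsupp.tail h
    simpa using this
  calc #F.support ≤ #((univ : Finset (Fin (n + 1))).finsuppAntidiag d) :=
        card_le_card_of_injOn _ (fun m hm => ?_) hcons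
    _ = (n + d).choose n := by
        rw [card_finsuppAntidiag_nat_eq_choose, card_univ, Fintype.card_fin, add_right_comm,
          Nat.add_sub_cancel, Nat.choose_symm_add]
  rw [mem_coe, mem_finsuppAntidiag', Finsupp.sum_cons]
  have := MvPolynomial.le_totalDegree hm
  exact ⟨by omega, subset_univ _⟩

theorem vPoly_le_v_coeff (p : Point) {P : MvPolynomial (Fin n) K} {m : Fin n →₀ ℕ}
    (hm : m ∈ P.support) : vPoly v p P ≤ v p (P.coeff m) := by
  rw [vPoly, dif_pos ⟨m, hm⟩]
  exact inf'_le _ hm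

theorem max_zero_neg_vPoly_le {p : Point} {P : MvPolynomial (Fin n) K} {b : ℤ} (hb : 0 ≤ b)
    (h : ∀ m ∈ P.support, -v p (P.coeff m) ≤ b) : max 0 (-vPoly v p P) ≤ b := by
  rw [vPoly]
  split_ifs with hP
  · obtain ⟨m, hm, he⟩ := exists_mem_eq_inf' hP fun m => v p (P.coeff m)
    rw [he]
    exact max_le hb (h m hm)
  · simpa using hb

def coeffZeroPoleSet (v : Point → K → ℤ) (P : MvPolynomial (Fin n) K) : Set Point :=
  ⋃ m ∈ P.support, {p | v p (P.coeff m) ≠ 0}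

theorem vPoly_eq_zero_of_notMem_coeffZeroPoleSet {p : Point} {P : MvPolynomial (Fin n) K}
    (hp : p ∉ coeffZeroPoleSet v P) : vPoly v p P = 0 := by
  simp only [coeffZeroPoleSet, Set.mem_iUnion, Set.mem_ofPred_eq, not_exists, not_not] at hp
  rw [vPoly]
  split_ifs with hP
  · obtain ⟨m, hm, he⟩ := exists_mem_eq_inf' hP fun m => v p (P.coeff m)
    rw [he, hp m hm]
  · rfl

theorem IsFunctionField.finite_coeffZeroPoleSet (hK : IsFunctionField k v genus)
    (P : MvPolynomial (Fin n) K) : (coeffZeroPoleSet v P).Finite :=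
  P.support.finite_toSet.biUnion fun _ hm =>
    hK.finite_support _ (MvPolynomial.mem_support_iff.1 hm)

theorem IsFunctionField.finite_support_htilde (hK : IsFunctionField k v genus)
    (P : MvPolynomial (Fin n) K) : (support fun p => max 0 (-vPoly v p P)).Finite :=
  (hK.finite_coeffZeroPoleSet P).subset fun p hp => by
    by_contra h
    simp [vPoly_eq_zero_of_notMem_coeffZeroPoleSet h] at hp

theorem IsFunctionField.height_coeff_le_htilde (hK : IsFunctionField k v genus)
    {P : MvPolynomial (Fin n) K} {m : Fin n →₀ ℕ} (hm : m ∈ P.support) :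
    height v (P.coeff m) ≤ htilde v P :=
  finsum_le_finsum'
    ((hK.finite_support _ (MvPolynomial.mem_support_iff.1 hm)).subset
      (support_comp_subset (g := fun x : ℤ => max 0 (-x)) (by simp) _))
    (hK.finite_support_htilde P)
    fun p => max_le_max le_rfl (neg_le_neg (vPoly_le_v_coeff p hm))

theorem IsFunctionField.ncard_coeffZeroPoleSet_le (hK : IsFunctionField k v genus)
    (P : MvPolynomial (Fin n) K) :
    ((coeffZeroPoleSet v P).ncard : ℤ) ≤ 2 * #P.support * htilde v P := by
  calc ((coeffZeroPoleSet v P).ncard : ℤ)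
      ≤ ∑ m ∈ P.support, ({p | v p (P.coeff m) ≠ 0}.ncard : ℤ) := by
        exact_mod_cast P.support.set_ncard_biUnion_le _
    _ ≤ ∑ m ∈ P.support, 2 * htilde v P := sum_le_sum fun m hm =>
        (hK.ncard_setOf_v_ne_zero_le (MvPolynomial.mem_support_iff.1 hm)).trans
          (by linarith [hK.height_coeff_le_htilde hm])
    _ = 2 * #P.support * htilde v P := by rw [sum_const, nsmul_eq_mul]; ring

theorem indicator_one_nonneg {α : Type*} (s : Set α) (a : α) :
    0 ≤ s.indicator (1 : α → ℤ) a :=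
  Set.indicator_nonneg (fun _ _ => zero_le_one) a

theorem finsum_indicator_one_eq_ncard {α : Type*} {s : Set α} (hs : s.Finite) :
    ∑ᶠ a, s.indicator (1 : α → ℤ) a = s.ncard := by
  rw [← finsum_mem_def, finsum_mem_eq_finite_toFinset_sum _ hs, Set.ncard_eq_toFinset_card _ hs]
  simp

theorem IsGoodDerivation.neg_v_coeff_Du_le (hD : IsGoodDerivation k v genus D dt)
    (hK : IsFunctionField k v genus) (hu : ∀ j, u j ≠ 0) {F : MvPolynomial (Fin n) K}
    {m : Fin n →₀ ℕ} (hm : m ∈ (Du D u F).support) (p : Point) :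
    -v p ((Du D u F).coeff m) ≤ max 0 (-vPoly v p F) + max 0 (dt p)
      + (coeffZeroPoleSet v F).indicator 1 p + {q | ∃ j, v q (u j) ≠ 0}.indicator 1 p := by
  set U := ∏ j, u j ^ m j
  have hmF := support_Du_subset F hm
  have ha : F.coeff m ≠ 0 := MvPolynomial.mem_support_iff.1 hmF
  have hU : U ≠ 0 := prod_ne_zero_iff.2 fun j _ => pow_ne_zero _ (hu j)
  have hcoeff : (Du D u F).coeff m = D (F.coeff m * U) / U := by rw [coeff_Du, if_pos hmF]
  have hDc : D (F.coeff m * U) ≠ 0 :=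
    (div_ne_zero_iff.1 (hcoeff ▸ MvPolynomial.mem_support_iff.1 hm)).1
  have hv := hD.v_D_ge (mul_ne_zero ha hU) hDc p
  rw [hK.v_mul p _ _ ha hU] at hv
  have hY := indicator_one_nonneg (coeffZeroPoleSet v F) p
  have hZ := indicator_one_nonneg {q | ∃ j, v q (u j) ≠ 0} p
  have hind : v p (F.coeff m) + v p U ≠ 0 →
      (1 : ℤ) ≤
        (coeffZeroPoleSet v F).indicator 1 p + {q | ∃ j, v q (u j) ≠ 0}.indicator 1 p := by
    intro h
    by_cases hva : v p (F.coeff m) = 0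
    · have hpZ : p ∈ {q | ∃ j, v q (u j) ≠ 0} := by
        by_contra! hpZ
        simp only [Set.mem_ofPred_eq, not_exists, not_not] at hpZ
        exact h (by simp only [hva, show v p U = 0 from hK.v_prod_pow_eq_zero p hu hpZ m,
          add_zero])
      rw [Set.indicator_of_mem hpZ]
      simpa using hY
    · have hpY : p ∈ coeffZeroPoleSet v F := Set.mem_biUnion hmF hva
      rw [Set.indicator_of_mem hpY]
      simpa using hZ
  have hvF := vPoly_le_v_coeff (v := v) p hmF
  have hF := le_max_right 0 (-vPoly v p F)
  have hdt := le_max_right 0 (dt p)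
  rw [hcoeff, hK.v_div p hDc hU]
  split_ifs at hv with h
  · linarith
  · linarith [hind h]

theorem htilde_Du_le_ncard (hK : IsFunctionField k v genus)
    (hD : IsGoodDerivation k v genus D dt)
    (hu : ∀ j, u j ≠ 0) (F : MvPolynomial (Fin n) K) :
    htilde v (Du D u F) ≤ (2 * #F.support + 1) * htilde v F
      + {p | ∃ j, v p (u j) ≠ 0}.ncard + 3 * genus := by
  set Y := coeffZeroPoleSet v F
  set Z := {p | ∃ j, v p (u j) ≠ 0}
  have hY : Y.Finite := hK.finite_coeffZeroPoleSet F
  have hZ : Z.Finite := by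
    simpa only [Z, Set.ofPred_exists] using Set.finite_iUnion fun j => hK.finite_support _ (hu j)
  have hdt : HasFiniteSupport fun p => max 0 (dt p) :=
    (hD.finite_setOf_dt_pos hK).subset fun p hp => by
      simp only [mem_support, Set.mem_ofPred_eq] at hp ⊢
      omega
  have hFfin : HasFiniteSupport fun p => max 0 (-vPoly v p F) := hK.finite_support_htilde F
  have hYfin : HasFiniteSupport (Y.indicator (1 : Point → ℤ)) :=
    hY.subset Set.support_indicator_subset
  have hZfin : HasFiniteSupport (Z.indicator (1 : Point → ℤ)) :=
    hZ.subset Set.support_indicator_subset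
  calc htilde v (Du D u F)
      ≤ ∑ᶠ p, (max 0 (-vPoly v p F) + max 0 (dt p) + Y.indicator 1 p + Z.indicator 1 p) :=
        finsum_le_finsum' (hK.finite_support_htilde _)
          (((hFfin.fun_add hdt).fun_add hYfin).fun_add hZfin) fun p =>
          max_zero_neg_vPoly_le
            (by linarith [le_max_left 0 (-vPoly v p F), le_max_left 0 (dt p),
              indicator_one_nonneg Y p, indicator_one_nonneg Z p])
            fun _ hm => hD.neg_v_coeff_Du_le hK hu hm p
    _ = htilde v F + ∑ᶠ p, max 0 (dt p) + Y.ncard + Z.ncard := by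
        rw [finsum_add_distrib ((hFfin.fun_add hdt).fun_add hYfin) hZfin,
          finsum_add_distrib (hFfin.fun_add hdt) hYfin, finsum_add_distrib hFfin hdt,
          finsum_indicator_one_eq_ncard hY, finsum_indicator_one_eq_ncard hZ, htilde]
    _ ≤ (2 * #F.support + 1) * htilde v F + Z.ncard + 3 * genus := by
        linarith [hD.sum_dt, hK.ncard_coeffZeroPoleSet_le F]

end

theorem htilde_Du_le_general
    (k K Point : Type*) [Field k] [Field K] [Algebra k K]
    (v : Point → K → ℤ) (genus : ℕ) (hK : IsFunctionField k v genus)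
    (D : K → K) (dt : Point → ℤ) (hD : IsGoodDerivation k v genus D dt)
    (S : Set Point) (hS : S.Finite)
    (n : ℕ) (F : MvPolynomial (Fin n) K)
    (u : Fin n → K) (hu : ∀ i, IsSUnit v S (u i)) :
    htilde v (Du D u F) ≤ (2 * (F.support.card : ℤ) + 1) * htilde v F
        + (S.ncard : ℤ) + 3 * genus
    ∧ htilde v (Du D u F)
        ≤ (2 * (Nat.choose (n + F.totalDegree) n : ℤ) + 1) * htilde v F
          + 3 * max 1 (2 * (genus : ℤ) - 2 + (S.ncard : ℤ)) := by
  have hu₀ : ∀ j, u j ≠ 0 := fun j => (hu j).1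
  have hmain := htilde_Du_le_ncard hK hD hu₀ F
  have hZS : {p | ∃ j, v p (u j) ≠ 0}.ncard ≤ S.ncard :=
    Set.ncard_le_ncard (fun p ⟨j, hj⟩ => by_contra fun hp => hj ((hu j).2 p hp)) hS
  have hZ₁ := hK.ncard_setOf_exists_v_ne_zero_ne_one hu₀
  have hcoeff : (2 * (#F.support : ℤ) + 1) * htilde v F ≤
      (2 * ((n + F.totalDegree).choose n : ℤ) + 1) * htilde v F :=
    mul_le_mul_of_nonneg_right (by have := card_support_le_choose F; omega)
      (finsum_nonneg fun _ => le_max_left _ _)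
  have hS₃ : ({p | ∃ j, v p (u j) ≠ 0}.ncard : ℤ) + 3 * genus ≤
      3 * max 1 (2 * (genus : ℤ) - 2 + S.ncard) := by
    omega
  constructor <;> linarith

/-- **Proposition 3.2.** For a nonconstant `F ∈ K[x_1,…,x_n]` and `S`-units `u_1,…,u_n`,
`h̃(D_u(F)) ≤ (2|I_F|+1)·h̃(F) + |S| + 3𝔤`; in particular, with
`c₁ = 2·C(n+deg F, n)+1` and `c₂ = 3`,
`h̃(D_u(F)) ≤ c₁·h̃(F) + c₂·max{1, 2𝔤−2+|S|}`. -/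
theorem htilde_Du_le
    (k K Point : Type*) [Field k] [Field K] [Algebra k K] [IsAlgClosed k] [CharZero k]
    (v : Point → K → ℤ) (genus : ℕ) (hK : IsFunctionField k v genus)
    (D : K → K) (dt : Point → ℤ) (hD : IsGoodDerivation k v genus D dt)
    (S : Set Point) (hS : S.Finite)
    (n : ℕ) (F : MvPolynomial (Fin n) K) (hF : 0 < F.totalDegree)
    (u : Fin n → K) (hu : ∀ i, IsSUnit v S (u i)) :
    htilde v (Du D u F) ≤ (2 * (F.support.card : ℤ) + 1) * htilde v F
        + (S.ncard : ℤ) + 3 * genus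
    ∧ htilde v (Du D u F)
        ≤ (2 * (Nat.choose (n + F.totalDegree) n : ℤ) + 1) * htilde v F
          + 3 * max 1 (2 * (genus : ℤ) - 2 + (S.ncard : ℤ)) :=
  htilde_Du_le_general k K Point v genus hK D dt hD S hS n F u hu

end FunctionFieldGCD
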